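/- arXiv:0811.0765 — 4 statements merged into one kernel-verified Lean document; each statement's English description precedes it below -/
import Mathlib

section
/- For z = iy with 0 < y < 1, the boundary value of h from the right half plane satisfies lim_{ε→0+} h(iy + ε) = -iy + sqrt(1 - y^2), i.e. the analytic continuation of 1/(z+sqrt(1+z^2)) from Re z > 0 to the cut takes the value -z + sqrt(1+z^2) with sqrt(1+z^2) = sqrt(1-y^2) > 0. -/
open Complex Filter

/-- for z = iy, 0 < y < 1, the boundary value of
h(z) = 1/(z + sqrt(1+z²)) from the right half plane is -iy + √(1-y²). -/
theorem h_boundary_value_from_right (y : ℝ) (hy₁ : 0 < y) (hy₂ : y < 1) :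
    Tendsto
      (fun ε : ℝ => 1 / ((I * y + (ε : ℂ)) + (1 + (I * y + (ε : ℂ)) ^ 2) ^ (1 / 2 : ℂ)))
      (nhdsWithin 0 (Set.Ioi 0))
      (nhds (-(I * y) + (Real.sqrt (1 - y ^ 2) : ℂ))) := by
  set s : ℝ := Real.sqrt (1 - y ^ 2) with hs_def
  have hy2 : (0:ℝ) < 1 - y ^ 2 := by nlinarith
  have hs2 : s ^ 2 = 1 - y ^ 2 := Real.sq_sqrt hy2.le
  have hspos : 0 < s := Real.sqrt_pos.mpr hy2
  have hval : (1 + (I * (y:ℂ)) ^ 2) = ((1 - y ^ 2 : ℝ) : ℂ) := by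
    push_cast; ring_nf; simp [I_sq]; ring
  have hcpow : (1 + (I * (y:ℂ)) ^ 2) ^ (1 / 2 : ℂ) = (s : ℂ) := by
    rw [hval, show ((1 / 2 : ℂ)) = (((1/2 : ℝ)) : ℂ) by norm_num,
      ← Complex.ofReal_cpow hy2.le, Complex.ofReal_inj, hs_def, Real.sqrt_eq_rpow]
  have hden : (I * (y:ℂ) + (s:ℂ)) ≠ 0 := by
    intro h
    have := congrArg Complex.im h
    simp at this
    linarith
  have hca : ContinuousAt (fun z : ℂ => 1 / (z + (1 + z ^ 2) ^ (1 / 2 : ℂ))) (I * y) := by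
    apply ContinuousAt.div continuousAt_const
    · apply ContinuousAt.add continuousAt_id
      apply ContinuousAt.cpow (by fun_prop) continuousAt_const
      left
      show (0:ℝ) < (1 + (I * (y:ℂ)) ^ 2).re
      rw [hval, Complex.ofReal_re]
      exact hy2
    · rw [hcpow]; exact hden
  have htend : Tendsto (fun ε : ℝ => I * (y:ℂ) + (ε : ℂ))
      (nhdsWithin 0 (Set.Ioi 0)) (nhds (I * y)) := by
    have : Tendsto (fun ε : ℝ => I * (y:ℂ) + (ε : ℂ)) (nhds 0) (nhds (I * y + ((0:ℝ):ℂ))) :=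
      (continuous_const.add Complex.continuous_ofReal).tendsto 0
    simpa using this.mono_left nhdsWithin_le_nhds
  have hcomp := hca.tendsto.comp htend
  have hs2c : (s:ℂ) ^ 2 = 1 - (y:ℂ) ^ 2 := by
    rw [← Complex.ofReal_pow, hs2]; push_cast; ring
  have hIy : (I * (y:ℂ)) ^ 2 = -(y:ℂ) ^ 2 := by rw [mul_pow, I_sq]; ring
  have hvalue : 1 / (I * (y:ℂ) + (1 + (I * (y:ℂ)) ^ 2) ^ (1 / 2 : ℂ)) = -(I * y) + (s : ℂ) := by
    rw [hcpow, div_eq_iff hden]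
    linear_combination hIy - hs2c
  rw [← hvalue]
  exact hcomp
end

section
/- The rational function R_n(z) (the n-level truncated continued fraction with partial quotients 2z) has residue sin²(jπ/(n+1))/(n+1) at its pole z_j = i cos(jπ/(n+1)), for each j = 1, ..., n. -/
/-!
Writing `P_n(z) = iⁿ U_n(-iz)` with `U_n` the Chebyshev polynomials of the second kind, `P_n` obeys
the recurrence of the continued fraction, so `R_n(z) = -i U_{n-1}(-iz) / U_n(-iz)` away from the
finitely many zeros of `U_0, …, U_{n-1}`. At `z_j` we have `-i z_j = cos θ` with
`θ = jπ/(n+1)`, so `sin θ ≠ 0 = sin ((n+1)θ)`. Then `U_{n-1}(cos θ) = -cos ((n+1)θ)` and,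
evaluating `(n+1) T_{n+1} = X U_n - (1 - X²) U_n'`, `sin² θ · U_n'(cos θ) = -(n+1) cos ((n+1)θ)`.
Hence `z_j` is a simple zero of the denominator and the residue `U_{n-1}(cos θ) / U_n'(cos θ)` is
`sin² θ / (n+1)`.
-/

open Complex Real Filter

/-- The truncated continued fraction: R 1 z = 1/(2z), R (k+1) z = 1/(2z + R k z). -/
noncomputable def cfR : ℕ → ℂ → ℂ
  | 0, _ => 0
  | 1, z => 1 / (2 * z)
  | n + 2, z => 1 / (2 * z + cfR (n + 1) z)

open Polynomial Polynomial.Chebyshev Topology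

theorem eventually_nhdsNE_eval_mul_ne_zero {K : Type*} [Field K] [TopologicalSpace K]
    [T1Space K] {p : K[X]} (hp : p ≠ 0) {c : K} (hc : c ≠ 0) (w : K) :
    ∀ᶠ z in 𝓝[≠] w, p.eval (c * z) ≠ 0 :=
  nhdsNE_le_cofinite w <|
    ((p.finite_setOfPred_isRoot hp).preimage (mul_right_injective₀ hc).injOn).compl_mem_cofinite

theorem tendsto_sub_mul_div_of_hasDerivAt {𝕜 : Type*} [NontriviallyNormedField 𝕜]
    {f g : 𝕜 → 𝕜} {w g' : 𝕜} (hf : ContinuousAt f w) (hg : HasDerivAt g g' w)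
    (hgw : g w = 0) (hg' : g' ≠ 0) :
    Tendsto (fun z => (z - w) * (f z / g z)) (𝓝[≠] w) (𝓝 (f w / g')) := by
  refine ((hf.tendsto.mono_left nhdsWithin_le_nhds).div
    (hasDerivAt_iff_tendsto_slope.mp hg) hg').congr fun z => ?_
  -- an identity for every `z`: where `g z = 0` both sides are `0` since `x / 0 = 0`
  rw [Pi.div_apply, slope_def_field, hgw, sub_zero, div_div_eq_mul_div, mul_div_right_comm,
    mul_comm]

theorem Complex.cos_ne_zero_of_sin_eq_zero {z : ℂ} (h : sin z = 0) : cos z ≠ 0 := fun hc => by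
  simpa [h, hc] using sin_sq_add_cos_sq z

namespace Polynomial.Chebyshev

variable {θ : ℂ} {n : ℤ}

theorem U_complex_cos_eq_zero (hs : sin θ ≠ 0) (h : sin ((n + 1) * θ) = 0) :
    (U ℂ n).eval (cos θ) = 0 := by
  have hU := U_complex_cos θ n
  rw [h] at hU
  exact (mul_eq_zero.mp hU).resolve_right hs

theorem U_sub_one_complex_cos (hs : sin θ ≠ 0) (h : sin ((n + 1) * θ) = 0) :
    (U ℂ (n - 1)).eval (cos θ) = -cos ((n + 1) * θ) := by
  have hU := U_complex_cos θ (n - 1)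
  have hsub : sin ((((n - 1 : ℤ) : ℂ) + 1) * θ) = sin ((n + 1) * θ - θ) := by push_cast; ring_nf
  rw [hsub, Complex.sin_sub, h] at hU
  exact mul_right_cancel₀ hs (by linear_combination hU)

theorem sin_sq_mul_derivative_U_complex_cos (hs : sin θ ≠ 0) (h : sin ((n + 1) * θ) = 0) :
    sin θ ^ 2 * (derivative (U ℂ n)).eval (cos θ) = -((n + 1) * cos ((n + 1) * θ)) := by
  have hT := congrArg (eval (cos θ)) (add_one_mul_T_eq_poly_in_U (R := ℂ) n)
  simp only [eval_mul, eval_add, eval_sub, eval_one, eval_pow, eval_X, eval_intCast,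
    U_complex_cos_eq_zero hs h, T_complex_cos] at hT
  push_cast at hT
  linear_combination hT + (derivative (U ℂ n)).eval (cos θ) * Complex.sin_sq_add_cos_sq θ

theorem derivative_U_complex_cos_ne_zero (hn : (n : ℂ) + 1 ≠ 0) (hs : sin θ ≠ 0)
    (h : sin ((n + 1) * θ) = 0) : (derivative (U ℂ n)).eval (cos θ) ≠ 0 := fun h0 => by
  simpa [h0, hn, Complex.cos_ne_zero_of_sin_eq_zero h] using
    sin_sq_mul_derivative_U_complex_cos hs h

theorem U_sub_one_div_derivative_U_complex_cos (hn : (n : ℂ) + 1 ≠ 0) (hs : sin θ ≠ 0)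
    (h : sin ((n + 1) * θ) = 0) :
    (U ℂ (n - 1)).eval (cos θ) / (derivative (U ℂ n)).eval (cos θ) = sin θ ^ 2 / (n + 1) := by
  rw [div_eq_div_iff (derivative_U_complex_cos_ne_zero hn hs h) hn, U_sub_one_complex_cos hs h]
  linear_combination -sin_sq_mul_derivative_U_complex_cos hs h

end Polynomial.Chebyshev

theorem cfR_succ_eq (n : ℕ) {z : ℂ} (h : ∀ k ≤ n, (U ℂ k).eval (-I * z) ≠ 0) :
    cfR (n + 1) z = -I * (U ℂ n).eval (-I * z) / (U ℂ (n + 1 : ℕ)).eval (-I * z) := by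
  induction n with
  | zero =>
    simp only [cfR, Nat.cast_zero, U_zero, eval_one, zero_add, Nat.cast_one, U_one, eval_mul,
      eval_ofNat, eval_X]
    rw [show 2 * (-I * z) = -I * (2 * z) by ring, mul_div_mul_left _ _ (neg_ne_zero.mpr I_ne_zero)]
  | succ m ih =>
    rw [cfR, ih fun k hk => h k (by omega)]
    have hrec : (U ℂ (m + 2 : ℕ)).eval (-I * z) =
        2 * (-I * z) * (U ℂ (m + 1 : ℕ)).eval (-I * z) - (U ℂ m).eval (-I * z) := by
      push_cast; rw [U_add_two]; simp
    have hb := h (m + 1) le_rfl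
    generalize (U ℂ m).eval (-I * z) = a at *
    generalize (U ℂ (m + 1 : ℕ)).eval (-I * z) = b at *
    generalize (U ℂ (m + 2 : ℕ)).eval (-I * z) = c at hrec ⊢
    have hden : 2 * z + -I * a / b = (2 * z * b - I * a) / b := by field_simp; ring
    have hrec' : c = -I * (2 * z * b - I * a) := by linear_combination hrec - a * I_sq
    rw [hden, one_div_div, hrec', mul_div_mul_left _ _ (neg_ne_zero.mpr I_ne_zero)]

theorem tendsto_sub_mul_cfR_of_sin_eq_zero (n : ℕ) {θ : ℂ} (hs : Complex.sin θ ≠ 0)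
    (h : Complex.sin ((n + 2) * θ) = 0) :
    Tendsto (fun z => (z - I * Complex.cos θ) * cfR (n + 1) z) (𝓝[≠] (I * Complex.cos θ))
      (𝓝 (Complex.sin θ ^ 2 / (n + 2))) := by
  have hidx : (((n + 1 : ℕ) : ℤ) : ℂ) + 1 = n + 2 := by push_cast; ring
  have hn : (((n + 1 : ℕ) : ℤ) : ℂ) + 1 ≠ 0 := by rw [hidx]; exact_mod_cast (n + 1).succ_ne_zero
  have h' : Complex.sin (((((n + 1 : ℕ) : ℤ) : ℂ) + 1) * θ) = 0 := by rwa [hidx]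
  have hw : -I * (I * Complex.cos θ) = Complex.cos θ := by
    rw [← mul_assoc, neg_mul, I_mul_I, neg_neg, one_mul]
  have hcf : ∀ᶠ z in 𝓝[≠] (I * Complex.cos θ), cfR (n + 1) z =
      -I * (U ℂ n).eval (-I * z) / (U ℂ (n + 1 : ℕ)).eval (-I * z) := by
    have hU : ∀ᶠ z in 𝓝[≠] (I * Complex.cos θ), ∀ k ∈ Set.Iic n, (U ℂ k).eval (-I * z) ≠ 0 :=
      (Set.finite_Iic n).eventually_all.mpr fun k _ =>
        eventually_nhdsNE_eval_mul_ne_zero (U_ne_zero ℂ k (by omega)) (neg_ne_zero.mpr I_ne_zero) _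
    exact hU.mono fun z hz => cfR_succ_eq n hz
  have hD := derivative_U_complex_cos_ne_zero hn hs h'
  have hres := tendsto_sub_mul_div_of_hasDerivAt (f := fun z => -I * (U ℂ n).eval (-I * z))
    (g := fun z => (U ℂ (n + 1 : ℕ)).eval (-I * z)) (by fun_prop)
    (((U ℂ (n + 1 : ℕ)).hasDerivAt _).comp (I * Complex.cos θ)
      ((hasDerivAt_id _).const_mul (-I)))
    (by simp only [hw]; exact U_complex_cos_eq_zero hs h')
    (by rw [mul_one, hw]; exact mul_ne_zero hD (neg_ne_zero.mpr I_ne_zero))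
  have hval := U_sub_one_div_derivative_U_complex_cos hn hs h'
  rw [show ((n + 1 : ℕ) : ℤ) - 1 = n by omega, hidx] at hval
  rw [hw, mul_one, mul_comm _ (-I), mul_div_mul_left _ _ (neg_ne_zero.mpr I_ne_zero), hval] at hres
  exact hres.congr' (hcf.mono fun z hz => by simp only [hz])

/-- the residue of R_n at its pole z_j = i·cos(jπ/(n+1)) is
sin²(jπ/(n+1))/(n+1). -/
theorem cfR_residue (n : ℕ) (hn : 1 ≤ n) (j : ℕ) (hj : j ∈ Finset.Icc 1 n) :
    Tendsto (fun z : ℂ => (z - I * Real.cos (j * π / (n + 1))) * cfR n z)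
      (nhdsWithin (I * Real.cos (j * π / (n + 1)))
        {(I * Real.cos (j * π / (n + 1)) : ℂ)}ᶜ)
      (nhds ((Real.sin (j * π / (n + 1)) ^ 2 / (n + 1) : ℝ) : ℂ)) := by
  obtain ⟨m, rfl⟩ := Nat.exists_eq_add_of_le' hn
  obtain ⟨hj1, hjn⟩ := Finset.mem_Icc.mp hj
  set θ : ℝ := j * π / (↑(m + 1) + 1)
  have hpos : (0 : ℝ) < ↑(m + 1) + 1 := by positivity
  have hθ : ((m : ℝ) + 2) * θ = j * π := by
    simp only [θ]; field_simp; push_cast; ring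
  have hθ0 : 0 < θ := div_pos (mul_pos (by exact_mod_cast hj1) Real.pi_pos) hpos
  have hθπ : θ < π := by
    have hj' : (j : ℝ) < ↑(m + 1) + 1 := by exact_mod_cast Nat.lt_succ_of_le hjn
    rw [div_lt_iff₀ hpos]
    nlinarith [Real.pi_pos]
  have hs : Complex.sin θ ≠ 0 := by
    exact_mod_cast (Real.sin_pos_of_pos_of_lt_pi hθ0 hθπ).ne'
  have hsn : Complex.sin ((m + 2) * θ) = 0 := by
    rw [← Complex.sin_nat_mul_pi j]
    exact_mod_cast congrArg (fun x : ℝ => Complex.sin x) hθ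
  simp only [ofReal_cos]
  convert tendsto_sub_mul_cfR_of_sin_eq_zero m hs hsn using 2
  push_cast; ring
end

section
/- Let g be C² on a neighborhood of [-i,i], t ≥ 0, and M a bound for |g|, |g'|, |g''| on [-i,i]. With θ_j = jπ/(n+1), z_j = i cos θ_j, and α_j = sin²θ_j/(n+1), the quadrature error satisfies |∫_{-i}^{i} 2 sqrt(1+z²) e^{zt} g(z) dz − 2πi Σ_{j=1}^n g(z_j) e^{z_j t} α_j| ≤ C · M · (t² + t + 1)/n² for an absolute constant C. -/
/-!
Substituting `y = cos θ` turns the integral into `2i ∫₀^π F` with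
`F θ = sin² θ · e^{i t cos θ} g (i cos θ)`, and the residue sum into `2i` times the trapezoidal sum
of `F` with step `π / (n + 1)`; the endpoint terms are absent because `F 0 = F π = 0`. The
trapezoidal rule bounds the difference by `π³ sup ‖F''‖ / (12 (n + 1)²)`, and the Leibniz and chain
rules give `‖F''‖ ≤ 6 M (t² + t + 1)`, because `|e^{zt}| = 1` on the imaginary axis.
-/

open Complex Real
open Set intervalIntegral
open scoped Interval

theorem norm_smul_le_of_le {𝕜 E : Type*} [NontriviallyNormedField 𝕜] [NormedAddCommGroup E]
    [NormedSpace 𝕜 E] {a : 𝕜} {b : E} {A B : ℝ} (ha : ‖a‖ ≤ A) (hb : ‖b‖ ≤ B) :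
    ‖a • b‖ ≤ A * B := by
  rw [norm_smul]
  exact mul_le_mul ha hb (norm_nonneg _) ((norm_nonneg _).trans ha)

theorem trapezoidal_error_le_of_hasDerivAt {f f' f'' : ℝ → ℝ} {a b ζ : ℝ}
    (hf : ∀ x ∈ [[a, b]], HasDerivAt f (f' x) x) (hf' : ∀ x ∈ [[a, b]], HasDerivAt f' (f'' x) x)
    (hζ : ∀ x ∈ [[a, b]], |f'' x| ≤ ζ) {N : ℕ} (hN : 0 < N) :
    |trapezoidal_error f N a b| ≤ |b - a| ^ 3 * ζ / (12 * N ^ 2) := by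
  rcases eq_or_ne a b with rfl | hab
  · simp
  have hs := uniqueDiffOn_uIcc hab
  have hderiv : ∀ x ∈ [[a, b]], derivWithin f [[a, b]] x = f' x := fun x hx =>
    (hf x hx).hasDerivWithinAt.derivWithin (hs x hx)
  refine trapezoidal_error_le (fun x hx => (hf x hx).differentiableAt.differentiableWithinAt)
    (fun x hx => ((hf' x hx).differentiableAt.differentiableWithinAt).congr hderiv (hderiv x hx))
    (fun x => ?_) hN
  by_cases hx : x ∈ [[a, b]]
  · rw [iteratedDerivWithin_succ, iteratedDerivWithin_one, derivWithin_congr hderiv (hderiv x hx),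
      (hf' x hx).hasDerivWithinAt.derivWithin (hs x hx)]
    exact hζ x hx
  · rw [iteratedDerivWithin_succ, iteratedDerivWithin_one,
      derivWithin_zero_of_notMem_closure (by rwa [Set.uIcc, closure_Icc]), abs_zero]
    exact (abs_nonneg _).trans (hζ a left_mem_uIcc)

theorem norm_integral_sub_trapezoid_le {E : Type*} [NormedAddCommGroup E] [NormedSpace ℝ E]
    [CompleteSpace E] {F F' F'' : ℝ → E} {a b ζ : ℝ}
    (hF : ∀ x ∈ [[a, b]], HasDerivAt F (F' x) x) (hF' : ∀ x ∈ [[a, b]], HasDerivAt F' (F'' x) x)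
    (hζ : ∀ x ∈ [[a, b]], ‖F'' x‖ ≤ ζ) {N : ℕ} (hN : 0 < N) :
    ‖(∫ x in a..b, F x) - ((b - a) / N) • ((2 : ℝ)⁻¹ • (F a + F b) +
        ∑ k ∈ Finset.range (N - 1), F (a + (k + 1) * (b - a) / N))‖ ≤
      |b - a| ^ 3 * ζ / (12 * N ^ 2) := by
  set e := (∫ x in a..b, F x) - ((b - a) / N) •
    ((2 : ℝ)⁻¹ • (F a + F b) + ∑ k ∈ Finset.range (N - 1), F (a + (k + 1) * (b - a) / N))
  obtain ⟨φ, hφ, hφe⟩ := exists_dual_vector'' ℝ e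
  have hint : IntervalIntegrable F MeasureTheory.volume a b :=
    ContinuousOn.intervalIntegrable fun x hx => (hF x hx).continuousAt.continuousWithinAt
  have herr : φ e = -trapezoidal_error (fun x => φ (F x)) N a b := by
    simp only [e, trapezoidal_error, trapezoidal_integral, map_sub, map_smul, map_add, map_sum,
      φ.intervalIntegral_comp_comm hint, smul_eq_mul]
    ring
  have hφF'' : ∀ x ∈ [[a, b]], |φ (F'' x)| ≤ ζ := fun x hx =>
    (φ.le_of_opNorm_le hφ _).trans (by rw [one_mul]; exact hζ x hx)
  calc ‖e‖ = |trapezoidal_error (fun x => φ (F x)) N a b| := by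
        rw [← abs_neg, ← herr, hφe, RCLike.ofReal_real_eq_id, id, abs_norm]
    _ ≤ _ := trapezoidal_error_le_of_hasDerivAt
        (fun x hx => φ.hasFDerivAt.comp_hasDerivAt x (hF x hx))
        (fun x hx => φ.hasFDerivAt.comp_hasDerivAt x (hF' x hx)) hφF'' hN

theorem norm_integral_sub_trapezoid_le_of_eq_zero {E : Type*} [NormedAddCommGroup E]
    [NormedSpace ℝ E] [CompleteSpace E] {F F' F'' : ℝ → E} {a b ζ : ℝ}
    (hF : ∀ x ∈ [[a, b]], HasDerivAt F (F' x) x) (hF' : ∀ x ∈ [[a, b]], HasDerivAt F' (F'' x) x)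
    (hζ : ∀ x ∈ [[a, b]], ‖F'' x‖ ≤ ζ) (ha : F a = 0) (hb : F b = 0) (n : ℕ) :
    ‖(∫ x in a..b, F x) -
        ((b - a) / (n + 1)) • ∑ j ∈ Finset.Icc 1 n, F (a + j * (b - a) / (n + 1))‖ ≤
      |b - a| ^ 3 * ζ / (12 * (n + 1) ^ 2) := by
  have h := norm_integral_sub_trapezoid_le (N := n + 1) hF hF' hζ n.succ_pos
  rw [ha, hb, add_zero, smul_zero, zero_add, Nat.add_sub_cancel, Nat.cast_succ] at h
  rw [← Finset.Ico_add_one_right_eq_Icc, Finset.sum_Ico_eq_sum_range, Nat.add_sub_cancel]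
  simpa only [Nat.cast_add, Nat.cast_one, add_comm (1 : ℝ)] using h

theorem integral_sqrt_one_sub_sq_smul {E : Type*} [NormedAddCommGroup E] [NormedSpace ℝ E]
    (f : ℝ → E) :
    ∫ y in (-1 : ℝ)..1, √(1 - y ^ 2) • f y =
      ∫ θ in (0 : ℝ)..π, Real.sin θ ^ 2 • f (Real.cos θ) := by
  have hsub := integral_deriv_smul_comp_of_deriv_nonpos (a := 0) (b := π)
    (g := fun y => √(1 - y ^ 2) • f y) continuous_cos.continuousOn
    (fun θ _ => Real.hasDerivAt_cos θ)
    (fun θ hθ => by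
      rw [min_eq_left pi_pos.le, max_eq_right pi_pos.le] at hθ
      exact neg_nonpos.2 (sin_nonneg_of_nonneg_of_le_pi hθ.1.le hθ.2.le))
  rw [Real.cos_zero, Real.cos_pi] at hsub
  rw [integral_symm, ← hsub, ← integral_neg]
  refine integral_congr fun θ hθ => ?_
  rw [uIcc_of_le pi_pos.le] at hθ
  have hsin : √(1 - Real.cos θ ^ 2) = Real.sin θ := by
    rw [← Real.sin_sq, sqrt_sq (sin_nonneg_of_nonneg_of_le_pi hθ.1 hθ.2)]
  rw [Function.comp_apply, hsin, smul_smul, neg_mul, neg_smul, neg_neg, sq]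

structure HasDerivsBoundedOn {𝕜 E : Type*} [NontriviallyNormedField 𝕜] [NormedAddCommGroup E]
    [NormedSpace 𝕜 E] (f f₁ f₂ : 𝕜 → E) (s : Set 𝕜) (M₀ M₁ M₂ : ℝ) : Prop where
  hasDerivAt : ∀ x ∈ s, HasDerivAt f (f₁ x) x
  hasDerivAt_deriv : ∀ x ∈ s, HasDerivAt f₁ (f₂ x) x
  norm_le : ∀ x ∈ s, ‖f x‖ ≤ M₀
  norm_deriv_le : ∀ x ∈ s, ‖f₁ x‖ ≤ M₁
  norm_deriv₂_le : ∀ x ∈ s, ‖f₂ x‖ ≤ M₂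

namespace HasDerivsBoundedOn

variable {𝕜 E : Type*} [NontriviallyNormedField 𝕜] [NormedAddCommGroup E] [NormedSpace 𝕜 E]
  {s : Set 𝕜}

-- The middle term uses `ℕ`-scalar multiplication `2 •`, since `‖(2 : 𝕜)‖` need not be `2`.
theorem smul {u u₁ u₂ : 𝕜 → 𝕜} {v v₁ v₂ : 𝕜 → E} {A₀ A₁ A₂ B₀ B₁ B₂ : ℝ}
    (hu : HasDerivsBoundedOn u u₁ u₂ s A₀ A₁ A₂) (hv : HasDerivsBoundedOn v v₁ v₂ s B₀ B₁ B₂) :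
    HasDerivsBoundedOn (fun x => u x • v x) (fun x => u₁ x • v x + u x • v₁ x)
      (fun x => u₂ x • v x + 2 • (u₁ x • v₁ x) + u x • v₂ x) s
      (A₀ * B₀) (A₁ * B₀ + A₀ * B₁) (A₂ * B₀ + 2 * (A₁ * B₁) + A₀ * B₂) where
  hasDerivAt x hx := ((hu.hasDerivAt x hx).smul (hv.hasDerivAt x hx)).congr_deriv (add_comm _ _)
  hasDerivAt_deriv x hx := by
    refine (((hu.hasDerivAt_deriv x hx).smul (hv.hasDerivAt x hx)).add
      ((hu.hasDerivAt x hx).smul (hv.hasDerivAt_deriv x hx))).congr_deriv ?_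
    rw [two_nsmul]
    abel
  norm_le x hx := norm_smul_le_of_le (hu.norm_le x hx) (hv.norm_le x hx)
  norm_deriv_le x hx := (norm_add_le _ _).trans <| add_le_add
    (norm_smul_le_of_le (hu.norm_deriv_le x hx) (hv.norm_le x hx))
    (norm_smul_le_of_le (hu.norm_le x hx) (hv.norm_deriv_le x hx))
  norm_deriv₂_le x hx := by
    refine norm_add₃_le.trans (add_le_add_three
      (norm_smul_le_of_le (hu.norm_deriv₂_le x hx) (hv.norm_le x hx)) ?_
      (norm_smul_le_of_le (hu.norm_le x hx) (hv.norm_deriv₂_le x hx)))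
    refine norm_nsmul_le.trans ?_
    push_cast
    exact mul_le_mul_of_nonneg_left
      (norm_smul_le_of_le (hu.norm_deriv_le x hx) (hv.norm_deriv_le x hx)) zero_le_two

theorem mono {f f₁ f₂ : 𝕜 → E} {M₀ M₁ M₂ : ℝ} {t : Set 𝕜}
    (h : HasDerivsBoundedOn f f₁ f₂ s M₀ M₁ M₂) (hts : t ⊆ s) :
    HasDerivsBoundedOn f f₁ f₂ t M₀ M₁ M₂ where
  hasDerivAt x hx := h.hasDerivAt x (hts hx)
  hasDerivAt_deriv x hx := h.hasDerivAt_deriv x (hts hx)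
  norm_le x hx := h.norm_le x (hts hx)
  norm_deriv_le x hx := h.norm_deriv_le x (hts hx)
  norm_deriv₂_le x hx := h.norm_deriv₂_le x (hts hx)

theorem comp {𝕜' : Type*} [NontriviallyNormedField 𝕜'] [NormedAlgebra 𝕜 𝕜'] {t : Set 𝕜'}
    {H H₁ H₂ : 𝕜' → 𝕜'} {γ γ₁ γ₂ : 𝕜 → 𝕜'} {M₀ M₁ M₂ C₀ C₁ C₂ : ℝ}
    (hH : HasDerivsBoundedOn H H₁ H₂ t M₀ M₁ M₂) (hγ : HasDerivsBoundedOn γ γ₁ γ₂ s C₀ C₁ C₂)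
    (hst : MapsTo γ s t) :
    HasDerivsBoundedOn (fun x => H (γ x)) (fun x => H₁ (γ x) * γ₁ x)
      (fun x => H₂ (γ x) * γ₁ x ^ 2 + H₁ (γ x) * γ₂ x) s M₀ (M₁ * C₁) (M₂ * C₁ ^ 2 + M₁ * C₂) where
  hasDerivAt x hx := (hH.hasDerivAt _ (hst hx)).comp x (hγ.hasDerivAt x hx)
  hasDerivAt_deriv x hx := by
    refine (((hH.hasDerivAt_deriv _ (hst hx)).comp x (hγ.hasDerivAt x hx)).mul
      (hγ.hasDerivAt_deriv x hx)).congr_deriv ?_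
    simp only [Function.comp_apply]
    ring
  norm_le x hx := hH.norm_le _ (hst hx)
  norm_deriv_le x hx := norm_mul_le_of_le (hH.norm_deriv_le _ (hst hx)) (hγ.norm_deriv_le x hx)
  norm_deriv₂_le x hx := (norm_add_le _ _).trans <| add_le_add
    (norm_mul_le_of_le (hH.norm_deriv₂_le _ (hst hx))
      ((norm_pow_le _ 2).trans (pow_le_pow_left₀ (norm_nonneg _) (hγ.norm_deriv_le x hx) 2)))
    (norm_mul_le_of_le (hH.norm_deriv_le _ (hst hx)) (hγ.norm_deriv₂_le x hx))

end HasDerivsBoundedOn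

theorem I_mul_ofReal_mem_segment {y : ℝ} (hy : y ∈ Icc (-1) 1) : I * y ∈ segment ℝ (-I) I := by
  rw [segment_eq_image]
  refine ⟨(y + 1) / 2, ⟨by linarith [hy.1], by linarith [hy.2]⟩, ?_⟩
  simp only [Complex.real_smul]
  push_cast
  ring

theorem segment_neg_I_I_subset_re_eq_zero : segment ℝ (-I) I ⊆ {z : ℂ | z.re = 0} :=
  (convex_hyperplane reLm.isLinear 0).segment_subset (by simp) (by simp)

theorem hasDerivsBoundedOn_cexp_mul_ofReal (t : ℝ) :
    HasDerivsBoundedOn (fun z : ℂ => Complex.exp (z * t)) (fun z => t * Complex.exp (z * t))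
      (fun z => t ^ 2 * Complex.exp (z * t)) {z | z.re = 0} 1 |t| (|t| ^ 2) := by
  have hexp : ∀ z : ℂ, HasDerivAt (fun z : ℂ => Complex.exp (z * t)) (t * Complex.exp (z * t)) z :=
    fun z => (((hasDerivAt_id z).mul_const (t : ℂ)).cexp).congr_deriv (by simp [mul_comm])
  have hnorm : ∀ z : ℂ, z.re = 0 → ‖Complex.exp (z * t)‖ = 1 := fun z hz => by
    simp [Complex.norm_exp, hz]
  refine ⟨fun z _ => hexp z, fun z _ => ?_, fun z hz => (hnorm z hz).le, fun z hz => ?_,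
    fun z hz => ?_⟩
  · exact ((hexp z).const_mul (t : ℂ)).congr_deriv (by ring)
  · simp [hnorm z hz]
  · simp [hnorm z hz]

theorem ContDiffOn.hasDerivsBoundedOn {𝕜 : Type*} [NontriviallyNormedField 𝕜] {g : 𝕜 → 𝕜}
    {U s : Set 𝕜} {M₀ M₁ M₂ : ℝ} (hg : ContDiffOn 𝕜 2 g U) (hU : IsOpen U) (hsU : s ⊆ U)
    (h₀ : ∀ z ∈ s, ‖g z‖ ≤ M₀) (h₁ : ∀ z ∈ s, ‖deriv g z‖ ≤ M₁)
    (h₂ : ∀ z ∈ s, ‖deriv (deriv g) z‖ ≤ M₂) :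
    HasDerivsBoundedOn g (deriv g) (deriv (deriv g)) s M₀ M₁ M₂ where
  hasDerivAt z hz :=
    ((hg.differentiableOn two_ne_zero).differentiableAt (hU.mem_nhds (hsU hz))).hasDerivAt
  hasDerivAt_deriv z hz :=
    (((hg.deriv_of_isOpen hU (m := 1) (by norm_num)).differentiableOn one_ne_zero).differentiableAt
      (hU.mem_nhds (hsU hz))).hasDerivAt
  norm_le := h₀
  norm_deriv_le := h₁
  norm_deriv₂_le := h₂

theorem hasDerivsBoundedOn_I_mul_cos :
    HasDerivsBoundedOn (fun θ : ℝ => I * Real.cos θ) (fun θ => -(I * Real.sin θ))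
      (fun θ => -(I * Real.cos θ)) univ 1 1 1 := by
  have hcos : ∀ θ : ℝ, HasDerivAt (fun θ : ℝ => I * Real.cos θ) (-(I * Real.sin θ)) θ := fun θ =>
    ((Real.hasDerivAt_cos θ).ofReal_comp.const_mul I).congr_deriv (by push_cast; ring)
  have hsin : ∀ θ : ℝ, HasDerivAt (fun θ : ℝ => -(I * Real.sin θ)) (-(I * Real.cos θ)) θ :=
    fun θ => ((Real.hasDerivAt_sin θ).ofReal_comp.const_mul I).neg
  refine ⟨fun θ _ => hcos θ, fun θ _ => hsin θ, fun θ _ => ?_, fun θ _ => ?_, fun θ _ => ?_⟩ <;>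
    simp only [norm_neg, norm_mul, Complex.norm_I, one_mul, Complex.norm_real, Real.norm_eq_abs,
      abs_sin_le_one, abs_cos_le_one]

theorem hasDerivsBoundedOn_sin_sq :
    HasDerivsBoundedOn (fun θ => Real.sin θ ^ 2) (fun θ => Real.sin (2 * θ))
      (fun θ => 2 * Real.cos (2 * θ)) univ 1 1 2 := by
  refine ⟨fun θ _ => ?_, fun θ _ => ?_, fun θ _ => ?_, fun θ _ => ?_, fun θ _ => ?_⟩
  · exact ((Real.hasDerivAt_sin θ).pow 2).congr_deriv (by rw [Real.sin_two_mul]; ring)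
  · exact (((hasDerivAt_id θ).const_mul 2).sin).congr_deriv (by simp [mul_comm])
  · simpa using abs_sin_le_one θ
  · simpa using abs_sin_le_one (2 * θ)
  · simpa [abs_mul] using abs_cos_le_one (2 * θ)

theorem integral_sqrt_mul_cexp_eq (g : ℂ → ℂ) (t : ℝ) :
    (∫ y in (-1 : ℝ)..1, I * (2 * (√(1 - y ^ 2) : ℂ) * cexp (I * y * t) * g (I * y))) =
      2 * I * ∫ θ in (0 : ℝ)..π,
        Real.sin θ ^ 2 • (cexp (I * Real.cos θ * t) • g (I * Real.cos θ)) := by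
  rw [← integral_sqrt_one_sub_sq_smul fun y : ℝ => cexp (I * y * t) • g (I * y),
    ← integral_const_mul]
  refine integral_congr fun y _ => ?_
  simp only [smul_eq_mul, Complex.real_smul]
  ring

theorem residue_sum_eq_trapezoid_sum (g : ℂ → ℂ) (t : ℝ) (n : ℕ) :
    2 * π * I * ∑ j ∈ Finset.Icc 1 n, g (I * Real.cos (j * π / (n + 1))) *
        cexp (I * Real.cos (j * π / (n + 1)) * t) * (Real.sin (j * π / (n + 1)) ^ 2 / (n + 1) : ℝ) =
      2 * I * ((π / (n + 1)) • ∑ j ∈ Finset.Icc 1 n, Real.sin (j * π / (n + 1)) ^ 2 •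
        (cexp (I * Real.cos (j * π / (n + 1)) * t) • g (I * Real.cos (j * π / (n + 1))))) := by
  rw [Finset.smul_sum, Finset.mul_sum, Finset.mul_sum]
  refine Finset.sum_congr rfl fun j _ => ?_
  simp only [smul_eq_mul, Complex.real_smul]
  push_cast
  ring

/-- there is an absolute constant C such that the quadrature
error for ∫_{-i}^{i} 2√(1+z²) e^{zt} g(z) dz (parametrized as z = iy) against
the residue sum 2πi Σ_j g(z_j) e^{z_j t} α_j is at most C·M·(t²+t+1)/n². -/
theorem quadrature_error_absolute_constant :
    ∃ C : ℝ, 0 < C ∧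
      ∀ (n : ℕ), 1 ≤ n →
      ∀ (g : ℂ → ℂ) (U : Set ℂ), IsOpen U → segment ℝ (-I) I ⊆ U →
        ContDiffOn ℂ 2 g U →
      ∀ (t : ℝ), 0 ≤ t →
      ∀ (M : ℝ),
        (∀ z ∈ segment ℝ (-I) I,
            ‖g z‖ ≤ M ∧ ‖deriv g z‖ ≤ M ∧ ‖deriv (deriv g) z‖ ≤ M) →
        ‖(∫ y in (-1 : ℝ)..1,
              I * (2 * (Real.sqrt (1 - y ^ 2) : ℂ) *
                Complex.exp ((I * y) * t) * g (I * y))) -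
            2 * π * I * ∑ j ∈ Finset.Icc 1 n,
              g (I * Real.cos (j * π / (n + 1))) *
                Complex.exp ((I * Real.cos (j * π / (n + 1))) * t) *
                (Real.sin (j * π / (n + 1)) ^ 2 / (n + 1) : ℝ)‖ ≤
          C * M * (t ^ 2 + t + 1) / n ^ 2 := by
  refine ⟨π ^ 3, by positivity, fun n hn g U hU hsub hg t ht M hM => ?_⟩
  have hM0 : 0 ≤ M := (norm_nonneg _).trans (hM I (right_mem_segment ℝ _ _)).1
  have hg₂ := hg.hasDerivsBoundedOn hU hsub (fun z hz => (hM z hz).1)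
    (fun z hz => (hM z hz).2.1) (fun z hz => (hM z hz).2.2)
  have hH :=
    ((hasDerivsBoundedOn_cexp_mul_ofReal t).mono segment_neg_I_I_subset_re_eq_zero).smul hg₂
  have hF := hasDerivsBoundedOn_sin_sq.smul (hH.comp hasDerivsBoundedOn_I_mul_cos
    fun θ _ => I_mul_ofReal_mem_segment ⟨neg_one_le_cos θ, cos_le_one θ⟩)
  have htrap := norm_integral_sub_trapezoid_le_of_eq_zero (a := 0) (b := π)
    (ζ := 6 * (M * (t ^ 2 + t + 1))) (fun θ _ => hF.hasDerivAt θ trivial)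
    (fun θ _ => hF.hasDerivAt_deriv θ trivial)
    (fun θ _ => (hF.norm_deriv₂_le θ trivial).trans (by
      rw [abs_of_nonneg ht]; nlinarith [mul_nonneg hM0 ht, mul_nonneg hM0 (sq_nonneg t)]))
    (by simp) (by simp) n
  simp only [sub_zero, zero_add, abs_of_pos pi_pos] at htrap
  rw [integral_sqrt_mul_cexp_eq, residue_sum_eq_trapezoid_sum, ← mul_sub, norm_mul, norm_mul,
    Complex.norm_I, Complex.norm_two, mul_one]
  have hn0 : (0 : ℝ) < n := by exact_mod_cast hn
  calc 2 * ‖_‖ ≤ 2 * (π ^ 3 * (6 * (M * (t ^ 2 + t + 1))) / (12 * ((n : ℝ) + 1) ^ 2)) := by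
        gcongr
    _ = π ^ 3 * M * (t ^ 2 + t + 1) / ((n : ℝ) + 1) ^ 2 := by field_simp; ring
    _ ≤ π ^ 3 * M * (t ^ 2 + t + 1) / n ^ 2 := by gcongr; linarith
end

section
/- For Re z > 0, the truncated continued fraction R_n(z) (with R_1 = 1/(2z), R_{k+1} = 1/(2z+R_k)) converges as n → ∞ to sqrt(1+z²) − z = 1/(z + sqrt(1+z²)), sqrt being the principal branch. -/
/-!
With `w = √(1 + z²)`, the numbers `λ = z + w` and `μ = z - w` are the roots of
`t² = 2 z t + 1`, so `aₙ = λⁿ - μⁿ` satisfies `aₙ₊₂ = 2 z aₙ₊₁ + aₙ` and `Rₙ = aₙ / aₙ₊₁`.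
For `Re z > 0` the principal root has `Re w > 0` and lies in the same quadrant as `z`,
so `|μ| < |λ|` and `Rₙ → 1 / λ = w - z`.
-/

open Complex ComplexConjugate Filter Topology

theorem cfR_succ (n : ℕ) (z : ℂ) : cfR (n + 1) z = 1 / (2 * z + cfR n z) := by
  cases n <;> simp [cfR]

theorem cfR_eq_pow_sub_pow_div {z l m : ℂ} (hsum : l + m = 2 * z) (hprod : l * m = -1)
    (hne : ∀ n : ℕ, l ^ (n + 1) ≠ m ^ (n + 1)) (n : ℕ) :
    cfR n z = (l ^ n - m ^ n) / (l ^ (n + 1) - m ^ (n + 1)) := by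
  induction n with
  | zero => simp [cfR]
  | succ n ih =>
    have hrec : 2 * z * (l ^ (n + 1) - m ^ (n + 1)) + (l ^ n - m ^ n) =
        l ^ (n + 2) - m ^ (n + 2) := by
      rw [← hsum]
      linear_combination (l ^ n - m ^ n) * hprod
    rw [cfR_succ, ih, ← hrec]
    field_simp [sub_ne_zero.2 (hne n)]

theorem pow_ne_pow_of_norm_lt {𝕜 : Type*} [NormedDivisionRing 𝕜] {l m : 𝕜} (h : ‖m‖ < ‖l‖)
    {n : ℕ} (hn : n ≠ 0) : l ^ n ≠ m ^ n := fun heq => by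
  have := congrArg norm heq
  rw [norm_pow, norm_pow] at this
  exact (pow_lt_pow_left₀ h (norm_nonneg m) hn).ne' this

theorem tendsto_pow_sub_pow_div_pow_succ_sub_pow_succ {𝕜 : Type*} [NormedField 𝕜] {l m : 𝕜}
    (h : ‖m‖ < ‖l‖) :
    Tendsto (fun n : ℕ => (l ^ n - m ^ n) / (l ^ (n + 1) - m ^ (n + 1))) atTop (𝓝 l⁻¹) := by
  have hl : l ≠ 0 := norm_pos_iff.1 ((norm_nonneg m).trans_lt h)
  obtain ⟨r, rfl⟩ : ∃ r, m = r * l := ⟨m / l, (div_mul_cancel₀ m hl).symm⟩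
  have hr : ‖r‖ < 1 := by
    rw [norm_mul] at h
    exact (mul_lt_iff_lt_one_left (norm_pos_iff.2 hl)).1 h
  have hrn : Tendsto (fun n : ℕ => r ^ n) atTop (𝓝 0) :=
    tendsto_pow_atTop_nhds_zero_of_norm_lt_one hr
  have hone : Tendsto (fun n : ℕ => 1 - r ^ n) atTop (𝓝 1) := by
    simpa using (tendsto_const_nhds (x := (1 : 𝕜))).sub hrn
  have hlim : Tendsto (fun n : ℕ => (1 - r ^ n) / (l * (1 - r ^ (n + 1)))) atTop (𝓝 l⁻¹) := by
    simpa [Pi.div_def] using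
      hone.div ((hone.comp (tendsto_add_atTop_nat 1)).const_mul l) (by rwa [mul_one])
  refine hlim.congr fun n => ?_
  rw [← mul_div_mul_left _ _ (pow_ne_zero n hl)]
  ring

theorem cpow_inv_two_re_pos {x : ℂ} (hx : x ∈ slitPlane) : 0 < (x ^ (2⁻¹ : ℂ)).re := by
  rw [cpow_inv_two_re, Real.sqrt_pos]
  rcases mem_slitPlane_iff.1 hx with hre | him
  · linarith [norm_nonneg x]
  · linarith [neg_abs_le x.re, abs_re_lt_norm.2 him]

theorem one_add_sq_mem_slitPlane {z : ℂ} (hz : 0 < z.re) : 1 + z ^ 2 ∈ slitPlane := by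
  have hre : (1 + z ^ 2).re = 1 + z.re ^ 2 - z.im ^ 2 := by
    simp only [sq, add_re, one_re, mul_re]; ring
  have him : (1 + z ^ 2).im = 2 * z.re * z.im := by simp only [sq, add_im, one_im, mul_im]; ring
  rw [mem_slitPlane_iff, hre, him]
  by_cases hzim : z.im = 0
  · left
    nlinarith [sq_nonneg z.re]
  · exact Or.inr (mul_ne_zero (mul_ne_zero two_ne_zero hz.ne') hzim)

theorem re_mul_conj_pos_of_im_sq_mul_nonneg {z w : ℂ} (hz : 0 < z.re) (hw : 0 < w.re)
    (h : 0 ≤ (z ^ 2).im * (w ^ 2).im) : 0 < (z * conj w).re := by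
  simp only [sq, mul_im, mul_re, conj_re, conj_im] at h ⊢
  nlinarith [mul_pos hz hw]

theorem norm_sub_lt_norm_add_of_re_mul_conj_pos {z w : ℂ} (h : 0 < (z * conj w).re) :
    ‖z - w‖ < ‖z + w‖ := by
  rw [← sq_lt_sq₀ (norm_nonneg _) (norm_nonneg _), Complex.sq_norm, Complex.sq_norm,
    normSq_add, normSq_sub]
  linarith

/-- for Re z > 0, R_n(z) → √(1+z²) − z = 1/(z + √(1+z²)) as
n → ∞ (principal branch). -/
theorem cfR_tendsto_sqrt (z : ℂ) (hz : 0 < z.re) :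
    Tendsto (fun n => cfR n z) atTop (nhds ((1 + z ^ 2) ^ (1 / 2 : ℂ) - z)) ∧
      (1 + z ^ 2) ^ (1 / 2 : ℂ) - z = 1 / (z + (1 + z ^ 2) ^ (1 / 2 : ℂ)) := by
  set w := (1 + z ^ 2) ^ (1 / 2 : ℂ) with hw
  have hw_sq : w ^ 2 = 1 + z ^ 2 := by rw [hw, one_div]; exact cpow_ofNat_inv_pow _ 2
  have hw_re : 0 < w.re := by
    rw [hw, one_div]
    exact cpow_inv_two_re_pos (one_add_sq_mem_slitPlane hz)
  have hlt : ‖z - w‖ < ‖z + w‖ := norm_sub_lt_norm_add_of_re_mul_conj_pos <|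
    re_mul_conj_pos_of_im_sq_mul_nonneg hz hw_re (by simp [hw_sq, mul_self_nonneg])
  have hval : w - z = 1 / (z + w) := by
    rw [eq_div_iff (norm_pos_iff.1 ((norm_nonneg _).trans_lt hlt))]
    linear_combination hw_sq
  refine ⟨?_, hval⟩
  rw [hval, one_div]
  refine (tendsto_pow_sub_pow_div_pow_succ_sub_pow_succ hlt).congr fun n => ?_
  exact (cfR_eq_pow_sub_pow_div (by ring) (by linear_combination -hw_sq)
    (fun k => pow_ne_pow_of_norm_lt hlt k.succ_ne_zero) n).symm
end
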